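/- arXiv:1807.01512 — 3 statements merged into one kernel-verified Lean document; each statement's English description precedes it below -/
import Mathlib

section
/- Let P be the transition matrix of an irreducible reversible Markov chain on a finite state set S with stationary distribution π, let (X_k) be the chain started from π, and let f : S → ℝ. Then for every n ≥ 0, E[(f(X_n) - f(X_0))²] ≤ n · E[(f(X_1) - f(X_0))²]. -/
open scoped BigOperators

namespace MarkovTypeAux

variable {S : Type*} [Fintype S]

/-- Weighted inner product on `L²(π)`. -/
def ip (pi : S → ℝ) (g h : S → ℝ) : ℝ := ∑ x, pi x * (g x * h x)

lemma ip_symm (pi g h : S → ℝ) : ip pi g h = ip pi h g :=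
  Finset.sum_congr rfl fun x _ => by ring

lemma ip_sub_sub (pi a b c d : S → ℝ) :
    ip pi (a - b) (c - d) = ip pi a c - ip pi a d - ip pi b c + ip pi b d := by
  simp only [ip, Pi.sub_apply, ← Finset.sum_sub_distrib, ← Finset.sum_add_distrib]
  exact Finset.sum_congr rfl fun x _ => by ring

/-- Self-adjointness of a reversible kernel on `L²(π)`. -/
lemma ip_mulVec_comm (pi : S → ℝ) (P : Matrix S S ℝ)
    (hrev : ∀ x y, pi x * P x y = pi y * P y x) (g h : S → ℝ) :
    ip pi (P.mulVec g) h = ip pi g (P.mulVec h) := by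
  simp only [ip, Matrix.mulVec, dotProduct]
  calc ∑ x, pi x * ((∑ y, P x y * g y) * h x)
      = ∑ x, ∑ y, (pi x * P x y) * (g y * h x) := by
        refine Finset.sum_congr rfl fun x _ => ?_
        rw [Finset.sum_mul, Finset.mul_sum]
        exact Finset.sum_congr rfl fun y _ => by ring
    _ = ∑ x, ∑ y, (pi y * P y x) * (g y * h x) :=
        Finset.sum_congr rfl fun x _ => Finset.sum_congr rfl fun y _ => by rw [hrev]
    _ = ∑ y, ∑ x, (pi y * P y x) * (g y * h x) := Finset.sum_comm
    _ = ∑ y, pi y * (g y * ∑ x, P y x * h x) := by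
        refine Finset.sum_congr rfl fun y _ => ?_
        simp only [Finset.mul_sum]
        exact Finset.sum_congr rfl fun x _ => by ring

/-- Expansion of the quadratic form for a stochastic kernel with stationary measure `π`. -/
lemma expand_gen (pi : S → ℝ) (Q : Matrix S S ℝ) (hrow : ∀ x, ∑ y, Q x y = 1)
    (hstat : ∀ y, ∑ x, pi x * Q x y = pi y) (g : S → ℝ) (c : ℝ) :
    ∑ x, ∑ y, pi x * Q x y * (g y - c * g x) ^ 2 =
      (1 + c ^ 2) * ip pi g g - 2 * c * ip pi g (Q.mulVec g) := by
  have key : ∀ x y, pi x * Q x y * (g y - c * g x) ^ 2 =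
      pi x * Q x y * g y ^ 2 - 2 * c * (pi x * Q x y * (g x * g y))
        + c ^ 2 * (pi x * Q x y * (g x * g x)) := fun x y => by ring
  have T1 : ∑ x, ∑ y, pi x * Q x y * g y ^ 2 = ip pi g g := by
    rw [Finset.sum_comm]
    refine Finset.sum_congr rfl fun y _ => ?_
    calc ∑ x, pi x * Q x y * g y ^ 2 = (∑ x, pi x * Q x y) * g y ^ 2 := by
          rw [Finset.sum_mul]
      _ = pi y * (g y * g y) := by rw [hstat]; ring
  have T2 : ∑ x, ∑ y, pi x * Q x y * (g x * g y) = ip pi g (Q.mulVec g) := by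
    refine Finset.sum_congr rfl fun x _ => ?_
    simp only [Matrix.mulVec, dotProduct, Finset.mul_sum]
    exact Finset.sum_congr rfl fun y _ => by ring
  have T3 : ∑ x, ∑ y, pi x * Q x y * (g x * g x) = ip pi g g := by
    refine Finset.sum_congr rfl fun x _ => ?_
    calc ∑ y, pi x * Q x y * (g x * g x)
        = (pi x * (g x * g x)) * ∑ y, Q x y := by rw [Finset.mul_sum]; exact Finset.sum_congr rfl fun y _ => by ring
      _ = pi x * (g x * g x) := by rw [hrow, mul_one]
  calc ∑ x, ∑ y, pi x * Q x y * (g y - c * g x) ^ 2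
      = ∑ x, ∑ y, (pi x * Q x y * g y ^ 2 - 2 * c * (pi x * Q x y * (g x * g y))
          + c ^ 2 * (pi x * Q x y * (g x * g x))) := by
        exact Finset.sum_congr rfl fun x _ => Finset.sum_congr rfl fun y _ => key x y
    _ = (∑ x, ∑ y, pi x * Q x y * g y ^ 2)
        - 2 * c * (∑ x, ∑ y, pi x * Q x y * (g x * g y))
        + c ^ 2 * (∑ x, ∑ y, pi x * Q x y * (g x * g x)) := by
        simp only [Finset.sum_add_distrib, Finset.sum_sub_distrib, Finset.mul_sum]
    _ = (1 + c ^ 2) * ip pi g g - 2 * c * ip pi g (Q.mulVec g) := by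
        rw [T1, T2, T3]; ring

end MarkovTypeAux

open MarkovTypeAux in
/-- `ℝ` has Markov type 2 with constant 1: for an irreducible reversible Markov chain
on a finite state set `S` with transition matrix `P` and stationary distribution `π`,
started from stationarity, and any `f : S → ℝ`,
`E[(f(X_n) - f(X_0))²] ≤ n · E[(f(X_1) - f(X_0))²]`. Here the expectations are written
out using the `n`-step transition probabilities `(P ^ n) x y`. -/
theorem markov_type_two_real (S : Type*) [Fintype S] [DecidableEq S] [Nonempty S]
    (P : Matrix S S ℝ) (pi : S → ℝ)
    (hPnonneg : ∀ x y, 0 ≤ P x y) (hProw : ∀ x, ∑ y, P x y = 1)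
    (hpinonneg : ∀ x, 0 ≤ pi x) (hpisum : ∑ x, pi x = 1)
    (hirr : ∀ x y, ∃ n : ℕ, 0 < (P ^ n) x y)
    (hrev : ∀ x y, pi x * P x y = pi y * P y x)
    (f : S → ℝ) (n : ℕ) :
    ∑ x, ∑ y, pi x * (P ^ n) x y * (f y - f x) ^ 2 ≤
      n * ∑ x, ∑ y, pi x * P x y * (f y - f x) ^ 2 := by
  classical
  -- basic facts about powers of P
  have hPn_nonneg : ∀ (m : ℕ) (x y : S), 0 ≤ (P ^ m) x y := by
    intro m
    induction m with
    | zero => intro x y; by_cases h : x = y <;> simp [Matrix.one_apply, h]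
    | succ k ih =>
      intro x y
      rw [pow_succ, Matrix.mul_apply]
      exact Finset.sum_nonneg fun z _ => mul_nonneg (ih x z) (hPnonneg z y)
  have hrow_n : ∀ (m : ℕ) (x : S), ∑ y, (P ^ m) x y = 1 := by
    intro m
    induction m with
    | zero => intro x; simp [Matrix.one_apply]
    | succ k ih =>
      intro x
      simp only [pow_succ, Matrix.mul_apply]
      rw [Finset.sum_comm]
      calc ∑ z, ∑ y, (P ^ k) x z * P z y
          = ∑ z, (P ^ k) x z * ∑ y, P z y := by
            exact Finset.sum_congr rfl fun z _ => (Finset.mul_sum _ _ _).symm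
        _ = 1 := by simp only [hProw, mul_one]; exact ih x
  have hrev_n : ∀ (m : ℕ) (x y : S), pi x * (P ^ m) x y = pi y * (P ^ m) y x := by
    intro m
    induction m with
    | zero => intro x y; by_cases h : x = y <;> simp [Matrix.one_apply, h, eq_comm]
    | succ k ih =>
      intro x y
      conv_rhs => rw [pow_succ']
      rw [pow_succ]
      simp only [Matrix.mul_apply, Finset.mul_sum]
      calc ∑ z, pi x * ((P ^ k) x z * P z y)
          = ∑ z, (pi z * (P ^ k) z x) * P z y := by
            refine Finset.sum_congr rfl fun z _ => ?_
            rw [← mul_assoc, ih x z]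
        _ = ∑ z, (P ^ k) z x * (pi y * P y z) := by
            refine Finset.sum_congr rfl fun z _ => ?_
            rw [mul_comm (pi z) ((P ^ k) z x), mul_assoc, hrev z y]
        _ = ∑ z, pi y * (P y z * (P ^ k) z x) := Finset.sum_congr rfl fun z _ => by ring
  have hstat_n : ∀ (m : ℕ) (y : S), ∑ x, pi x * (P ^ m) x y = pi y := by
    intro m y
    calc ∑ x, pi x * (P ^ m) x y = ∑ x, pi y * (P ^ m) y x :=
          Finset.sum_congr rfl fun x _ => hrev_n m x y
      _ = pi y * ∑ x, (P ^ m) y x := (Finset.mul_sum _ _ _).symm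
      _ = pi y := by rw [hrow_n, mul_one]
  -- expansion of both sides in terms of the inner product
  have expand : ∀ (g : S → ℝ) (m : ℕ),
      ∑ x, ∑ y, pi x * (P ^ m) x y * (g y - g x) ^ 2 =
        2 * ip pi g g - 2 * ip pi g ((P ^ m).mulVec g) := by
    intro g m
    calc ∑ x, ∑ y, pi x * (P ^ m) x y * (g y - g x) ^ 2
        = ∑ x, ∑ y, pi x * (P ^ m) x y * (g y - 1 * g x) ^ 2 := by simp only [one_mul]
      _ = (1 + 1 ^ 2) * ip pi g g - 2 * 1 * ip pi g ((P ^ m).mulVec g) :=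
          expand_gen pi (P ^ m) (hrow_n m) (hstat_n m) g 1
      _ = 2 * ip pi g g - 2 * ip pi g ((P ^ m).mulVec g) := by ring
  -- positivity of I - P and I + P
  have hA_nonneg : ∀ g : S → ℝ, 0 ≤ ip pi g g - ip pi g (P.mulVec g) := by
    intro g
    have h := expand g 1
    rw [pow_one] at h
    have hpos : 0 ≤ ∑ x, ∑ y, pi x * P x y * (g y - g x) ^ 2 :=
      Finset.sum_nonneg fun x _ => Finset.sum_nonneg fun y _ =>
        mul_nonneg (mul_nonneg (hpinonneg x) (hPnonneg x y)) (sq_nonneg _)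
    linarith
  have hC_nonneg : ∀ g : S → ℝ, 0 ≤ ip pi g g + ip pi g (P.mulVec g) := by
    intro g
    have h := expand_gen pi P hProw (fun y => by simpa using hstat_n 1 y) g (-1)
    have hpos : 0 ≤ ∑ x, ∑ y, pi x * P x y * (g y - (-1) * g x) ^ 2 :=
      Finset.sum_nonneg fun x _ => Finset.sum_nonneg fun y _ =>
        mul_nonneg (mul_nonneg (hpinonneg x) (hPnonneg x y)) (sq_nonneg _)
    rw [h] at hpos
    linarith
  have hsa : ∀ g h : S → ℝ, ip pi (P.mulVec g) h = ip pi g (P.mulVec h) :=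
    ip_mulVec_comm pi P hrev
  -- the Dirichlet form A and its monotonicity along the semigroup
  set A : (S → ℝ) → ℝ := fun g => ip pi g g - ip pi g (P.mulVec g) with hA
  have hmono : ∀ g : S → ℝ, A (P.mulVec g) ≤ A g := by
    intro g
    set q := P.mulVec g with hq
    have h0 := hC_nonneg (g - q)
    have hPsub : P.mulVec (g - q) = q - P.mulVec q := by
      rw [Matrix.mulVec_sub]
    rw [hPsub] at h0
    rw [ip_sub_sub, ip_sub_sub] at h0
    have e1 : ip pi q g = ip pi g q := ip_symm pi q g
    have e2 : ip pi q q = ip pi g (P.mulVec q) := by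
      rw [hq, hsa]
    simp only [hA]
    linarith
  -- iterates of f
  have hpowVec : ∀ m : ℕ, (P ^ (m + 1)).mulVec f = P.mulVec ((P ^ m).mulVec f) := by
    intro m
    rw [pow_succ', ← Matrix.mulVec_mulVec]
  have hAiter : ∀ m : ℕ, A ((P ^ m).mulVec f) ≤ A f := by
    intro m
    induction m with
    | zero => simp [Matrix.one_mulVec]
    | succ k ih =>
      rw [hpowVec k]
      exact (hmono _).trans ih
  set a : ℕ → ℝ := fun m => ip pi f ((P ^ m).mulVec f) with ha
  have hstep : ∀ k : ℕ, a k - a (k + 1) ≤ A f := by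
    intro k
    set h := (P ^ k).mulVec f with hh
    have h0 := hA_nonneg (f - h)
    have hPsub : P.mulVec (f - h) = P.mulVec f - P.mulVec h := Matrix.mulVec_sub P f h
    rw [hPsub, ip_sub_sub, ip_sub_sub] at h0
    have e1 : ip pi h f = ip pi f h := ip_symm pi h f
    have e2 : ip pi h (P.mulVec f) = ip pi f (P.mulVec h) := by
      rw [← hsa, ip_symm]
    have e3 : a (k + 1) = ip pi f (P.mulVec h) := by
      rw [ha]; simp only [hpowVec k, hh]
    have e4 : a k = ip pi f h := rfl
    have e5 : A h ≤ A f := hAiter k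
    simp only [hA] at e5 ⊢
    rw [e3, e4]
    linarith
  have htel : a 0 - a n ≤ n * A f := by
    have : a 0 - a n = ∑ k ∈ Finset.range n, (a k - a (k + 1)) :=
      (Finset.sum_range_sub' a n).symm
    rw [this]
    calc ∑ k ∈ Finset.range n, (a k - a (k + 1))
        ≤ ∑ _k ∈ Finset.range n, A f := Finset.sum_le_sum fun k _ => hstep k
      _ = n * A f := by rw [Finset.sum_const, Finset.card_range, nsmul_eq_mul]
  have ha0 : a 0 = ip pi f f := by
    simp only [ha, pow_zero, Matrix.one_mulVec]
  have ha1 : a 1 = ip pi f (P.mulVec f) := by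
    simp only [ha, pow_one]
  rw [expand f n]
  have hrhs : ∑ x, ∑ y, pi x * P x y * (f y - f x) ^ 2 = 2 * A f := by
    have := expand f 1
    rw [pow_one] at this
    rw [this]; simp only [hA]; ring
  rw [hrhs]
  have hn : ip pi f ((P ^ n).mulVec f) = a n := rfl
  rw [hn]
  simp only [hA] at htel
  rw [ha0] at htel
  calc 2 * ip pi f f - 2 * a n = 2 * (ip pi f f - a n) := by ring
    _ ≤ 2 * ((n : ℝ) * (ip pi f f - ip pi f (P.mulVec f))) := by linarith
    _ = (n : ℝ) * (2 * (ip pi f f - ip pi f (P.mulVec f))) := by ring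
end

section
/- Let (a_n)_{n≥1} be a nondecreasing sequence of reals with a_n ≥ 1, let s > 1, set n_m := ⌈exp(m^s)⌉, and suppose limsup_{m→∞} (log a_{n_m})/(log n_m) ≤ c. Then limsup_{n→∞} (log a_n)/(log n) ≤ c. -/
/-!
For `n_m ≤ n < n_{m+1}`, monotonicity gives
`log a_n / log n ≤ (log a_{n_{m+1}} / log n_{m+1}) * (log n_{m+1} / log n_m)`,
and the last factor tends to `1` because `log n_m ~ m^s ~ (m+1)^s ~ log n_{m+1}`.
-/

open Filter Real Asymptotics Topology

theorem exists_le_mem_Ico_succ_of_tendsto_atTop {u : ℕ → ℕ} (hu : Tendsto u atTop atTop)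
    {M n : ℕ} (hn : u M ≤ n) : ∃ m ≥ M, n ∈ Set.Ico (u m) (u (m + 1)) := by
  obtain ⟨B, hB⟩ := eventually_atTop.1 (hu.eventually (eventually_gt_atTop n))
  have hMB : M ≤ B := by
    by_contra! h
    exact (hB M h.le).not_ge hn
  set m := Nat.findGreatest (fun k => u k ≤ n) B
  refine ⟨m, Nat.le_findGreatest hMB hn,
    Nat.findGreatest_spec (P := fun k => u k ≤ n) hMB hn, ?_⟩
  by_cases hmB : m + 1 ≤ B
  · exact not_le.1 <|
      Nat.findGreatest_is_greatest (P := fun k => u k ≤ n) (Nat.lt_succ_self m) hmB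
  · exact hB _ (by omega)

section

variable {A : ℕ → ℝ}

theorem div_log_le_div_log_mul_of_le_of_le (hA : Monotone A) (hA0 : 0 ≤ A) {k n l : ℕ}
    (hk : 1 < k) (hkn : k ≤ n) (hnl : n ≤ l) :
    A n / log n ≤ A l / log l * (log l / log k) := by
  have hlog_k : 0 < log k := log_pos (by exact_mod_cast hk)
  have hlog_l : 0 < log l := log_pos (by exact_mod_cast hk.trans_le (hkn.trans hnl))
  rw [div_mul_div_cancel₀ hlog_l.ne']
  exact div_le_div₀ (hA0 l) (hA hnl) hlog_k (log_le_log (by positivity) (by exact_mod_cast hkn))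

theorem eventually_div_log_le_mul (hA : Monotone A) (hA0 : 0 ≤ A) {u : ℕ → ℕ}
    (hu : Tendsto u atTop atTop) {b d : ℝ} (hb0 : 0 ≤ b)
    (hb : ∀ᶠ m in atTop, A (u m) / log (u m) ≤ b)
    (hd : ∀ᶠ m in atTop, log (u (m + 1)) / log (u m) ≤ d) :
    ∀ᶠ n in atTop, A n / log n ≤ b * d := by
  obtain ⟨M, hM⟩ := eventually_atTop.1
    (((tendsto_add_atTop_nat 1).eventually hb).and (hd.and (hu.eventually (eventually_gt_atTop 1))))
  filter_upwards [eventually_ge_atTop (u M)] with n hn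
  obtain ⟨m, hmM, hkn, hnl⟩ := exists_le_mem_Ico_succ_of_tendsto_atTop hu hn
  obtain ⟨hbm, hdm, hum⟩ := hM m hmM
  calc A n / log n ≤ A (u (m + 1)) / log (u (m + 1)) * (log (u (m + 1)) / log (u m)) :=
        div_log_le_div_log_mul_of_le_of_le hA hA0 hum hkn hnl.le
    _ ≤ b * d := mul_le_mul hbm hdm (div_nonneg (log_natCast_nonneg _) (log_natCast_nonneg _)) hb0

theorem limsup_div_log_le_limsup_comp (hA : Monotone A) (hA0 : 0 ≤ A) {u : ℕ → ℕ}
    (hu : Tendsto u atTop atTop)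
    (hratio : Tendsto (fun m => log (u (m + 1)) / log (u m)) atTop (𝓝 1)) :
    limsup (fun n => A n / log n) atTop ≤ limsup (fun m => A (u m) / log (u m)) atTop := by
  have hnonneg : ∀ n, 0 ≤ A n / log n := fun n => div_nonneg (hA0 n) (log_natCast_nonneg n)
  by_cases hbdd : IsBoundedUnder (· ≤ ·) atTop (fun m => A (u m) / log (u m))
  · have hF0 : 0 ≤ limsup (fun m => A (u m) / log (u m)) atTop :=
      le_limsup_of_frequently_le (.of_forall fun m => hnonneg (u m)) hbdd
    refine le_of_forall_gt_imp_ge_of_dense fun e he => ?_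
    obtain ⟨b, hFb, hbe⟩ := exists_between he
    have hb0 : 0 < b := hF0.trans_lt hFb
    have hle := eventually_div_log_le_mul hA hA0 hu hb0.le
      ((eventually_lt_of_limsup_lt hFb hbdd).mono fun _ => le_of_lt)
      (hratio.eventually (eventually_le_nhds ((one_lt_div hb0).2 hbe)))
    rw [mul_div_cancel₀ e hb0.ne'] at hle
    exact limsup_le_of_le (isCoboundedUnder_le_of_le atTop hnonneg) hle
  · -- Both limsups take the junk value `0` of an unbounded real sequence.
    have hunbdd : ¬ IsBoundedUnder (· ≤ ·) atTop (fun n => A n / log n) :=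
      fun h => hbdd (hu.isBoundedUnder_comp h)
    rw [Real.limsup_of_not_isBoundedUnder hunbdd, Real.limsup_of_not_isBoundedUnder hbdd]

end

theorem isEquivalent_log_natCeil_exp : (fun x => log ⌈exp x⌉₊) ~[atTop] id := by
  refine IsLittleO.isEquivalent ?_
  refine IsBigO.trans_isLittleO (g := fun _ => (1 : ℝ)) ?_ (isLittleO_const_id_atTop 1)
  refine IsBigO.of_bound (log 2) ?_
  filter_upwards [eventually_ge_atTop 0] with x hx
  have hceil_ge : exp x ≤ ⌈exp x⌉₊ := Nat.le_ceil _
  have hceil_le : (⌈exp x⌉₊ : ℝ) ≤ 2 * exp x := by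
    linarith [Nat.ceil_lt_add_one (exp_pos x).le, one_le_exp hx]
  have hlow : x ≤ log ⌈exp x⌉₊ := by
    simpa using log_le_log (exp_pos x) hceil_ge
  have hhigh : log ⌈exp x⌉₊ ≤ log 2 + x := by
    simpa [log_mul, (exp_pos x).ne'] using log_le_log (by positivity) hceil_le
  rw [Pi.sub_apply, id, norm_one, mul_one, Real.norm_of_nonneg (by linarith)]
  linarith

theorem tendsto_log_natCeil_exp_rpow_succ_div {s : ℝ} (hs : 0 < s) :
    Tendsto (fun m : ℕ => log ⌈exp (((m + 1 : ℕ) : ℝ) ^ s)⌉₊ / log ⌈exp ((m : ℝ) ^ s)⌉₊)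
      atTop (𝓝 1) := by
  have hpow : Tendsto (fun m : ℕ => (m : ℝ) ^ s) atTop atTop :=
    (tendsto_rpow_atTop hs).comp tendsto_natCast_atTop_atTop
  have hlog : (fun m : ℕ => log ⌈exp ((m : ℝ) ^ s)⌉₊) ~[atTop] fun m => (m : ℝ) ^ s :=
    isEquivalent_log_natCeil_exp.comp_tendsto hpow
  have hsucc : (fun m : ℕ => ((m + 1 : ℕ) : ℝ) ^ s) ~[atTop] fun m => (m : ℝ) ^ s := by
    have : (fun m : ℕ => ((m + 1 : ℕ) : ℝ)) ~[atTop] fun m => (m : ℝ) := by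
      push_cast
      exact IsEquivalent.refl.add_const_of_norm_tendsto_atTop
        (tendsto_norm_atTop_atTop.comp tendsto_natCast_atTop_atTop)
    exact this.rpow (fun m => Nat.cast_nonneg m)
  have hequiv := ((hlog.comp_tendsto (tendsto_add_atTop_nat 1)).trans hsucc).trans hlog.symm
  refine (isEquivalent_iff_tendsto_one ?_).1 hequiv
  filter_upwards [hlog.symm.tendsto_atTop hpow |>.eventually_gt_atTop 0] with m hm
  exact hm.ne'

/-- Subsequence-to-full-sequence step: if `(a_n)` is nondecreasing with `a_n ≥ 1`,
`s > 1`, `n_m = ⌈exp(m^s)⌉`, and `limsup_m (log a_{n_m})/(log n_m) ≤ c`, then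
`limsup_n (log a_n)/(log n) ≤ c`. -/
theorem limsup_log_ratio_of_subseq (a : ℕ → ℝ) (hmono : Monotone a)
    (hone : ∀ n, 1 ≤ a n) (s : ℝ) (hs : 1 < s) (c : ℝ)
    (hsub : Filter.limsup
        (fun m : ℕ => Real.log (a ⌈Real.exp ((m : ℝ) ^ s)⌉₊) /
          Real.log (⌈Real.exp ((m : ℝ) ^ s)⌉₊ : ℝ)) Filter.atTop ≤ c) :
    Filter.limsup (fun n : ℕ => Real.log (a n) / Real.log n) Filter.atTop ≤ c := by
  have hs0 : 0 < s := zero_lt_one.trans hs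
  have hlog_mono : Monotone fun n => log (a n) :=
    fun m n hmn => log_le_log (zero_lt_one.trans_le (hone m)) (hmono hmn)
  have hu : Tendsto (fun m : ℕ => ⌈exp ((m : ℝ) ^ s)⌉₊) atTop atTop :=
    tendsto_nat_ceil_atTop.comp <| tendsto_exp_atTop.comp <|
      (tendsto_rpow_atTop hs0).comp tendsto_natCast_atTop_atTop
  exact (limsup_div_log_le_limsup_comp hlog_mono (fun n => log_nonneg (hone n)) hu
    (tendsto_log_natCeil_exp_rpow_succ_div hs0)).trans hsub
end

section
/- For every γ ∈ [√(8/3), 2], one has (1/3)·(4 + γ² + √(16 + 2γ² + γ⁴)) ≤ √6·γ, with equality if and only if γ = √(8/3). -/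
/-- For every `γ ∈ [√(8/3), 2]`, the lower bound `(1/3)(4 + γ² + √(16 + 2γ² + γ⁴))`
for the LQG dimension is at most the upper bound `√6 γ`, with equality if and only if
`γ = √(8/3)`. -/
theorem lqg_dim_lower_le_upper (γ : ℝ) (hγ : γ ∈ Set.Icc (Real.sqrt (8 / 3)) 2) :
    (1 / 3 : ℝ) * (4 + γ ^ 2 + Real.sqrt (16 + 2 * γ ^ 2 + γ ^ 4)) ≤ Real.sqrt 6 * γ ∧
    ((1 / 3 : ℝ) * (4 + γ ^ 2 + Real.sqrt (16 + 2 * γ ^ 2 + γ ^ 4)) = Real.sqrt 6 * γ ↔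
      γ = Real.sqrt (8 / 3)) := by
  obtain ⟨h1, h2⟩ := hγ
  have hγ0 : 0 < γ := lt_of_lt_of_le (Real.sqrt_pos.mpr (by norm_num)) h1
  have h83 : Real.sqrt (8 / 3) ^ 2 = 8 / 3 := Real.sq_sqrt (by norm_num)
  have hs : 8 / 3 ≤ γ ^ 2 := by
    nlinarith [Real.sqrt_nonneg (8 / 3 : ℝ)]
  have hs4 : γ ^ 2 ≤ 4 := by nlinarith
  set u := Real.sqrt 6 with hudef
  have hu : u ^ 2 = 6 := Real.sq_sqrt (by norm_num)
  have hu0 : 0 < u := Real.sqrt_pos.mpr (by norm_num)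
  -- key inequality: √6 (4 + γ²) ≤ 10 γ
  have hkey : u * (4 + γ ^ 2) ≤ 10 * γ := by
    nlinarith [sq_nonneg (10 * γ - u * (4 + γ ^ 2)), sq_nonneg (10 * γ + u * (4 + γ ^ 2)),
      mul_nonneg (by linarith : (0:ℝ) ≤ 3 * γ ^ 2 - 8) (by linarith : (0:ℝ) ≤ 6 - γ ^ 2),
      mul_pos hu0 hγ0]
  have hB : 0 ≤ 3 * (u * γ) - (4 + γ ^ 2) := by
    nlinarith [mul_pos hu0 hγ0]
  have hR0 : (0:ℝ) ≤ 16 + 2 * γ ^ 2 + γ ^ 4 := by positivity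
  have hmain : Real.sqrt (16 + 2 * γ ^ 2 + γ ^ 4) ≤ 3 * (u * γ) - (4 + γ ^ 2) := by
    have h := Real.sqrt_le_sqrt (show (16 + 2 * γ ^ 2 + γ ^ 4 : ℝ) ≤
        (3 * (u * γ) - (4 + γ ^ 2)) ^ 2 by
      nlinarith [mul_le_mul_of_nonneg_right hkey hγ0.le])
    rwa [Real.sqrt_sq hB] at h
  constructor
  · linarith
  constructor
  · intro heq
    have hr : Real.sqrt (16 + 2 * γ ^ 2 + γ ^ 4) = 3 * (u * γ) - (4 + γ ^ 2) := by
      linarith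
    have hRB : (16 + 2 * γ ^ 2 + γ ^ 4 : ℝ) = (3 * (u * γ) - (4 + γ ^ 2)) ^ 2 := by
      rw [← hr, Real.sq_sqrt hR0]
    have heq1 : u * γ * (4 + γ ^ 2) = 10 * γ ^ 2 := by
      linear_combination (1/6) * hRB + (3/2) * γ ^ 2 * hu
    have hA : u * (4 + γ ^ 2) = 10 * γ :=
      mul_left_cancel₀ hγ0.ne' (by linear_combination heq1)
    have h6s : 6 * (4 + γ ^ 2) ^ 2 = 100 * γ ^ 2 := by
      linear_combination (u * (4 + γ ^ 2) + 10 * γ) * hA - (4 + γ ^ 2) ^ 2 * hu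
    have hfac : (3 * γ ^ 2 - 8) * (γ ^ 2 - 6) = 0 := by linear_combination (1/2) * h6s
    have hγ2 : γ ^ 2 = 8 / 3 := by
      rcases mul_eq_zero.mp hfac with h | h
      · linarith
      · linarith
    rw [show (8/3 : ℝ) = γ ^ 2 from hγ2.symm, Real.sqrt_sq hγ0.le]
  · intro heq
    have hγ2 : γ ^ 2 = 8 / 3 := by rw [heq]; exact h83
    have hR : Real.sqrt (16 + 2 * γ ^ 2 + γ ^ 4) = 16 / 3 := by
      rw [show (16 + 2 * γ ^ 2 + γ ^ 4 : ℝ) = (16/3) ^ 2 by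
        linear_combination (γ ^ 2 + 8/3 + 2) * hγ2]
      exact Real.sqrt_sq (by norm_num)
    have huγ : u * γ = 4 := by
      rw [heq, hudef, ← Real.sqrt_mul (by norm_num : (0:ℝ) ≤ 6),
        show (6 * (8/3) : ℝ) = 4 ^ 2 by norm_num, Real.sqrt_sq (by norm_num : (0:ℝ) ≤ 4)]
    rw [hR, huγ, hγ2]
    norm_num
end
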